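/- Fix a weight function g : ℕ² → ℝ≥0 and a Young diagram λ. With ψ and ψ* defined by ψ(i,j) = ∑_{(p,q): (i+p,j+q)∈λ} g(p,q) and ψ*(i,j) = ∑_{(p,q): p≤i, q≤j} g(i−p, j−q), we have ∑_{u∈λ} ψ(u) = ∑_{u∈λ} ψ*(u), and if g is strictly positive somewhere then ∏_{u∈λ, ψ(u)>0} ψ(u) ≤ ∏_{u∈λ, ψ*(u)>0} ψ*(u) whenever all ψ(u), ψ*(u) > 0. -/

import Mathlib

open scoped NNReal

/-- `ψ(i,j)`: sum of `g` over nonnegative shifts `(p,q)` with `(i+p, j+q)` still in `μ`. -/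
noncomputable def psi (μ : YoungDiagram) (g : ℕ → ℕ → ℝ≥0) (c : ℕ × ℕ) : ℝ≥0 :=
  ∑ d ∈ μ.cells.filter (fun d => c.1 ≤ d.1 ∧ c.2 ≤ d.2), g (d.1 - c.1) (d.2 - c.2)

/-- `ψ*(i,j)`: sum of `g(i-p, j-q)` over `p ≤ i`, `q ≤ j`. -/
noncomputable def psiStar (g : ℕ → ℕ → ℝ≥0) (c : ℕ × ℕ) : ℝ≥0 :=
  ∑ p ∈ Finset.range (c.1 + 1), ∑ q ∈ Finset.range (c.2 + 1), g (c.1 - p) (c.2 - q)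

namespace HookAux

open Finset

lemma downclosed_mem_iff {S : Finset ℕ} (h : ∀ a ∈ S, ∀ b, b ≤ a → b ∈ S) (a : ℕ) :
    a ∈ S ↔ a < S.card := by
  constructor
  · intro ha
    have hsub : Finset.range (a + 1) ⊆ S := fun b hb =>
      h a ha b (Nat.lt_succ_iff.mp (Finset.mem_range.mp hb))
    have := Finset.card_le_card hsub
    simpa using this
  · intro ha
    by_contra hna
    have hsub : S ⊆ Finset.range a := by
      intro b hb
      rw [Finset.mem_range]
      by_contra hba
      exact hna (h b hb a (le_of_not_gt hba))
    have := Finset.card_le_card hsub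
    simp only [Finset.card_range] at this
    omega

lemma abel_sum (n : ℕ) (hn : 1 ≤ n) (c w : ℕ → ℝ)
    (hpre : ∀ k ≤ n, ∑ i ∈ range k, c i ≤ 0)
    (hw : ∀ i j, i ≤ j → w j ≤ w i) :
    ∑ i ∈ range n, c i * w i ≤ (∑ i ∈ range n, c i) * w (n - 1) := by
  induction n with
  | zero => omega
  | succ m ih =>
    rcases Nat.eq_or_lt_of_le hn with h1 | h1
    · simp [← h1]
    · have hm : 1 ≤ m := by omega
      have IH := ih hm (fun k hk => hpre k (by omega))
      have hP : ∑ i ∈ range m, c i ≤ 0 := hpre m (by omega)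
      rw [Finset.sum_range_succ, Finset.sum_range_succ (f := c)]
      have h2 : (∑ i ∈ range m, c i) * w (m - 1) ≤ (∑ i ∈ range m, c i) * w m :=
        mul_le_mul_of_nonpos_left (hw (m-1) m (by omega)) hP
      have : m + 1 - 1 = m := rfl
      rw [this]
      nlinarith [IH]

lemma prod_le_prod_of_prefix (n : ℕ) (X Y : ℕ → ℝ)
    (hX : ∀ i < n, 0 < X i) (hY : ∀ i < n, 0 < Y i)
    (hmono : ∀ i j, i ≤ j → j < n → Y i ≤ Y j)
    (hpre : ∀ k ≤ n, ∑ i ∈ range k, (X i - Y i) ≤ 0)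
    (htot : ∑ i ∈ range n, X i = ∑ i ∈ range n, Y i) :
    ∏ i ∈ range n, X i ≤ ∏ i ∈ range n, Y i := by
  rcases Nat.eq_zero_or_pos n with rfl | hn
  · simp
  set w : ℕ → ℝ := fun i => (Y (min i (n - 1)))⁻¹ with hwdef
  set c : ℕ → ℝ := fun i => X i - Y i with hcdef
  have hYpos' : ∀ i, 0 < Y (min i (n - 1)) := fun i => hY _ (by omega)
  have hw : ∀ i j, i ≤ j → w j ≤ w i := by
    intro i j hij
    have : Y (min i (n-1)) ≤ Y (min j (n-1)) := hmono _ _ (by omega) (by omega)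
    exact inv_anti₀ (hYpos' i) this
  have habel := abel_sum n hn c w hpre hw
  have htot0 : ∑ i ∈ range n, c i = 0 := by
    simp only [hcdef, Finset.sum_sub_distrib, htot, sub_self]
  rw [htot0, zero_mul] at habel
  -- log comparison
  have hlog : ∀ i ∈ range n, Real.log (X i) - Real.log (Y i) ≤ c i * w i := by
    intro i hi
    rw [Finset.mem_range] at hi
    have hXi := hX i hi; have hYi := hY i hi
    have hmin : min i (n - 1) = i := by omega
    have hlt : Real.log (X i / Y i) ≤ X i / Y i - 1 :=
      Real.log_le_sub_one_of_pos (div_pos hXi hYi)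
    rw [Real.log_div (ne_of_gt hXi) (ne_of_gt hYi)] at hlt
    have : X i / Y i - 1 = c i * w i := by
      simp only [hcdef, hwdef, hmin]
      field_simp
    rw [this] at hlt; exact hlt
  have hsum : ∑ i ∈ range n, (Real.log (X i) - Real.log (Y i)) ≤ ∑ i ∈ range n, c i * w i :=
    Finset.sum_le_sum hlog
  have hlogsum : ∑ i ∈ range n, Real.log (X i) ≤ ∑ i ∈ range n, Real.log (Y i) := by
    rw [Finset.sum_sub_distrib] at hsum
    linarith [le_trans hsum habel]
  have hXprod : 0 < ∏ i ∈ range n, X i := Finset.prod_pos (fun i hi => hX i (Finset.mem_range.mp hi))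
  have hYprod : 0 < ∏ i ∈ range n, Y i := Finset.prod_pos (fun i hi => hY i (Finset.mem_range.mp hi))
  rw [← Real.log_le_log_iff hXprod hYprod]
  rw [Real.log_prod (fun i hi => ne_of_gt (hX i (Finset.mem_range.mp hi))),
      Real.log_prod (fun i hi => ne_of_gt (hY i (Finset.mem_range.mp hi)))]
  exact hlogsum

lemma suffix_card (n m : ℕ) (hm : m ≤ n) :
    (Finset.univ.filter (fun i : Fin n => n - m ≤ i.val)).card = m := by
  have hc : (Finset.univ.filter (fun i : Fin n => n - m ≤ i.val)).card
      = (Finset.Ico (n - m) n).card := by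
    apply Finset.card_bij' (fun (i : Fin n) (_ : i ∈ Finset.univ.filter (fun i : Fin n => n - m ≤ i.val)) => i.val)
      (fun a (ha : a ∈ Finset.Ico (n - m) n) => (⟨a, (Finset.mem_Ico.mp ha).2⟩ : Fin n))
    all_goals intro a ha
    all_goals simp at ha ⊢
    all_goals omega
  rw [hc, Nat.card_Ico]; omega

lemma sum_subset_le_suffix (n : ℕ) (X : Fin n → ℝ) (hmono : Monotone X) (S : Finset (Fin n)) :
    ∑ i ∈ S, X i ≤ ∑ i ∈ Finset.univ.filter (fun i : Fin n => n - S.card ≤ i.val), X i := by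
  set m := S.card with hm
  set T := Finset.univ.filter (fun i : Fin n => n - m ≤ i.val) with hT
  have hmn : m ≤ n := by
    have := Finset.card_le_univ S
    simpa using this
  have hcardT : T.card = m := suffix_card n m hmn
  have h1 : ∑ i ∈ S \ T, X i + ∑ i ∈ S ∩ T, X i = ∑ i ∈ S, X i := by
    rw [← Finset.sdiff_inter_self_left S T]
    exact Finset.sum_sdiff (Finset.inter_subset_left)
  have h2 : ∑ i ∈ T \ S, X i + ∑ i ∈ T ∩ S, X i = ∑ i ∈ T, X i := by
    rw [← Finset.sdiff_inter_self_left T S]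
    exact Finset.sum_sdiff (Finset.inter_subset_left)
  have hcard : (S \ T).card = (T \ S).card := Finset.card_sdiff_comm (by rw [hcardT])
  have hkey : ∑ i ∈ S \ T, X i ≤ ∑ i ∈ T \ S, X i := by
    rcases Finset.eq_empty_or_nonempty (S \ T) with he | hne
    · have he2 : T \ S = ∅ := Finset.card_eq_zero.mp (by rw [← hcard, he]; simp)
      rw [he, he2]
    · obtain ⟨i₁, hi₁⟩ := hne
      have hn1 : 0 < n := Nat.pos_of_ne_zero (by rintro rfl; exact absurd i₁.isLt (by omega))
      have hm1 : 0 < m := by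
        have : i₁ ∈ S := (Finset.mem_sdiff.mp hi₁).1
        have := Finset.card_pos.mpr ⟨i₁, this⟩
        omega
      have hnm : n - m < n := by omega
      set i₀ : Fin n := ⟨n - m, hnm⟩ with hi₀
      have hle1 : ∀ i ∈ S \ T, X i ≤ X i₀ := by
        intro i hi
        have : ¬ (n - m ≤ i.val) := by
          have := (Finset.mem_sdiff.mp hi).2
          simpa [hT] using this
        exact hmono (by rw [Fin.le_def]; simp [hi₀]; omega)
      have hle2 : ∀ i ∈ T \ S, X i₀ ≤ X i := by
        intro i hi
        have : n - m ≤ i.val := by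
          have := (Finset.mem_sdiff.mp hi).1
          simpa [hT] using this
        exact hmono (by rw [Fin.le_def]; simp [hi₀]; omega)
      calc ∑ i ∈ S \ T, X i ≤ (S \ T).card • X i₀ := Finset.sum_le_card_nsmul _ _ _ hle1
        _ = (T \ S).card • X i₀ := by rw [hcard]
        _ ≤ ∑ i ∈ T \ S, X i := Finset.card_nsmul_le_sum _ _ _ hle2
  have hinter : ∑ i ∈ S ∩ T, X i = ∑ i ∈ T ∩ S, X i := by rw [Finset.inter_comm]
  linarith [h1, h2, hkey, hinter]

lemma key (n : ℕ) (X Y : Fin n → ℝ) (hX : ∀ i, 0 < X i) (hY : ∀ i, 0 < Y i)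
    (htot : ∑ i, X i = ∑ i, Y i)
    (hmaj : ∀ S : Finset (Fin n), ∃ S' : Finset (Fin n), S'.card = S.card ∧
      ∑ i ∈ S, Y i ≤ ∑ i ∈ S', X i) :
    ∏ i, X i ≤ ∏ i, Y i := by
  classical
  set σ := Tuple.sort X with hσ
  set τ := Tuple.sort Y with hτ
  have hXmono : Monotone (X ∘ σ) := Tuple.monotone_sort X
  have hYmono : Monotone (Y ∘ τ) := Tuple.monotone_sort Y
  have eRange : ∀ (Z : Fin n → ℝ),
      ∑ i ∈ Finset.range n, (fun kk => if h : kk < n then Z ⟨kk, h⟩ else 1) i = ∑ j, Z j := by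
    intro Z
    rw [← Fin.sum_univ_eq_sum_range]
    exact Finset.sum_congr rfl (fun i _ => by simp [i.isLt])
  have eRangeP : ∀ (Z : Fin n → ℝ),
      ∏ i ∈ Finset.range n, (fun kk => if h : kk < n then Z ⟨kk, h⟩ else 1) i = ∏ j, Z j := by
    intro Z
    rw [← Fin.prod_univ_eq_prod_range]
    exact Finset.prod_congr rfl (fun i _ => by simp [i.isLt])
  have eIco : ∀ (Z : Fin n → ℝ) (k : ℕ),
      ∑ i ∈ Finset.Ico k n, (fun kk => if h : kk < n then Z ⟨kk, h⟩ else 1) i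
        = ∑ j ∈ Finset.univ.filter (fun j : Fin n => k ≤ j.val), Z j := by
    intro Z k
    refine Finset.sum_bij'
      (fun (a : ℕ) (ha : a ∈ Finset.Ico k n) => (⟨a, (Finset.mem_Ico.mp ha).2⟩ : Fin n))
      (fun (j : Fin n) (_ : j ∈ Finset.univ.filter (fun j : Fin n => k ≤ j.val)) => j.val)
      ?_ ?_ ?_ ?_ ?_
    · intro a ha
      simp only [Finset.mem_filter, Finset.mem_univ, true_and]
      exact (Finset.mem_Ico.mp ha).1
    · intro a ha
      exact Finset.mem_Ico.mpr ⟨(Finset.mem_filter.mp ha).2, a.isLt⟩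
    · intro a ha; rfl
    · intro a ha; simp
    · intro a ha
      show (if h : a < n then Z ⟨a, h⟩ else 1) = Z ⟨a, (Finset.mem_Ico.mp ha).2⟩
      rw [dif_pos]
  set X' : ℕ → ℝ := fun kk => if h : kk < n then (X ∘ σ) ⟨kk, h⟩ else 1 with hX'
  set Y' : ℕ → ℝ := fun kk => if h : kk < n then (Y ∘ τ) ⟨kk, h⟩ else 1 with hY'
  have hsuffix : ∀ k, k ≤ n →
      ∑ i ∈ Finset.Ico k n, Y' i ≤ ∑ i ∈ Finset.Ico k n, X' i := by
    intro k hk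
    set Sf := Finset.univ.filter (fun j : Fin n => k ≤ j.val) with hSf
    have hSfcard : Sf.card = n - k := by
      have := suffix_card n (n - k) (by omega)
      rw [hSf]
      rw [show n - (n - k) = k by omega] at this
      exact this
    have hYsuf : ∑ i ∈ Finset.Ico k n, Y' i = ∑ i ∈ Sf.image τ, Y i := by
      rw [Finset.sum_image (fun a _ b _ h => τ.injective h)]
      exact eIco (Y ∘ τ) k
    obtain ⟨S', hS'card, hS'⟩ := hmaj (Sf.image τ)
    have hcard' : S'.card = n - k := by
      rw [hS'card, Finset.card_image_of_injective _ τ.injective, hSfcard]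
    set S'' := S'.image σ.symm with hS''
    have hS''card : S''.card = n - k := by
      rw [hS'', Finset.card_image_of_injective _ σ.symm.injective, hcard']
    have hXtrans : ∑ i ∈ S', X i = ∑ j ∈ S'', (X ∘ σ) j := by
      rw [hS'', Finset.sum_image (fun a _ b _ h => σ.symm.injective h)]
      exact Finset.sum_congr rfl (fun i _ => by simp)
    have hle2 := sum_subset_le_suffix n (X ∘ σ) hXmono S''
    rw [hS''card, show n - (n - k) = k by omega] at hle2
    have hXsuf : ∑ j ∈ Finset.univ.filter (fun i : Fin n => k ≤ i.val), (X ∘ σ) j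
        = ∑ i ∈ Finset.Ico k n, X' i := (eIco (X ∘ σ) k).symm
    calc ∑ i ∈ Finset.Ico k n, Y' i = ∑ i ∈ Sf.image τ, Y i := hYsuf
      _ ≤ ∑ i ∈ S', X i := hS'
      _ = ∑ j ∈ S'', (X ∘ σ) j := hXtrans
      _ ≤ _ := hle2
      _ = ∑ i ∈ Finset.Ico k n, X' i := hXsuf
  have htotX : ∑ i ∈ Finset.range n, X' i = ∑ j, X j := by
    rw [hX', eRange (X ∘ σ)]
    exact Equiv.sum_comp σ X
  have htotY : ∑ i ∈ Finset.range n, Y' i = ∑ j, Y j := by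
    rw [hY', eRange (Y ∘ τ)]
    exact Equiv.sum_comp τ Y
  have htot' : ∑ i ∈ Finset.range n, X' i = ∑ i ∈ Finset.range n, Y' i := by
    rw [htotX, htotY]; exact htot
  have hpre : ∀ k ≤ n, ∑ i ∈ Finset.range k, (X' i - Y' i) ≤ 0 := by
    intro k hk
    have e1 : ∑ i ∈ Finset.range k, X' i + ∑ i ∈ Finset.Ico k n, X' i
        = ∑ i ∈ Finset.range n, X' i := Finset.sum_range_add_sum_Ico _ hk
    have e2 : ∑ i ∈ Finset.range k, Y' i + ∑ i ∈ Finset.Ico k n, Y' i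
        = ∑ i ∈ Finset.range n, Y' i := Finset.sum_range_add_sum_Ico _ hk
    have := hsuffix k hk
    rw [Finset.sum_sub_distrib]
    linarith
  have hfinal := prod_le_prod_of_prefix n X' Y'
    (fun i hi => by simp only [hX']; rw [dif_pos hi]; exact hX _)
    (fun i hi => by simp only [hY']; rw [dif_pos hi]; exact hY _)
    (fun i j hij hj => by
      simp only [hY']
      rw [dif_pos hj, dif_pos (lt_of_le_of_lt hij hj)]
      exact hYmono (show (⟨i, _⟩ : Fin n) ≤ ⟨j, hj⟩ from by simp [Fin.le_def]; omega))
    hpre htot'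
  have hprodX : ∏ i ∈ Finset.range n, X' i = ∏ j, X j := by
    rw [hX', eRangeP (X ∘ σ)]
    exact Equiv.prod_comp σ X
  have hprodY : ∏ i ∈ Finset.range n, Y' i = ∏ j, Y j := by
    rw [hY', eRangeP (Y ∘ τ)]
    exact Equiv.prod_comp τ Y
  rw [hprodX, hprodY] at hfinal
  exact hfinal

lemma cell_facts (μ : YoungDiagram) {d : ℕ × ℕ} (hd : d ∈ μ.cells) :
    d.1 < μ.colLen d.2 ∧ d.2 < μ.rowLen 0 ∧ d.1 < μ.colLen 0 := by
  rw [YoungDiagram.mem_cells] at hd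
  have h1 : d.1 < μ.colLen d.2 := YoungDiagram.mem_iff_lt_colLen.mp hd
  have h2 : d.2 < μ.rowLen d.1 := YoungDiagram.mem_iff_lt_rowLen.mp hd
  exact ⟨h1, lt_of_lt_of_le h2 (μ.rowLen_anti 0 d.1 (Nat.zero_le _)),
    lt_of_lt_of_le h1 (μ.colLen_anti 0 d.2 (Nat.zero_le _))⟩

lemma psi_eq (μ : YoungDiagram) (g : ℕ → ℕ → ℝ≥0) (c : ℕ × ℕ) :
    psi μ g c = ∑ s ∈ μ.cells.filter (fun s => (c.1 + s.1, c.2 + s.2) ∈ μ.cells), g s.1 s.2 := by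
  rw [psi]
  refine Finset.sum_bij' (fun d _ => (d.1 - c.1, d.2 - c.2)) (fun s _ => (c.1 + s.1, c.2 + s.2))
    ?_ ?_ ?_ ?_ ?_
  · rintro ⟨d1, d2⟩ hd
    rw [Finset.mem_filter] at hd ⊢
    obtain ⟨hdm, h1, h2⟩ := hd
    rw [YoungDiagram.mem_cells] at hdm
    dsimp only
    constructor
    · rw [YoungDiagram.mem_cells]
      exact μ.up_left_mem (Nat.sub_le _ _) (Nat.sub_le _ _) hdm
    · have he : (c.1 + (d1 - c.1), c.2 + (d2 - c.2)) = (d1, d2) := by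
        rw [Prod.mk.injEq]; dsimp only at h1 h2; constructor <;> omega
      rw [he, YoungDiagram.mem_cells]
      exact hdm
  · rintro ⟨s1, s2⟩ hs
    rw [Finset.mem_filter] at hs ⊢
    exact ⟨hs.2, Nat.le_add_right _ _, Nat.le_add_right _ _⟩
  · rintro ⟨d1, d2⟩ hd
    rw [Finset.mem_filter] at hd
    obtain ⟨-, h1, h2⟩ := hd
    dsimp only at h1 h2 ⊢
    rw [Prod.mk.injEq]
    constructor <;> omega
  · rintro ⟨s1, s2⟩ _
    dsimp only
    rw [Prod.mk.injEq]
    constructor <;> omega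
  · intro d _; rfl

lemma psiStar_eq (μ : YoungDiagram) (g : ℕ → ℕ → ℝ≥0) {c : ℕ × ℕ} (hc : c ∈ μ.cells) :
    psiStar g c = ∑ s ∈ μ.cells.filter (fun s => s.1 ≤ c.1 ∧ s.2 ≤ c.2), g s.1 s.2 := by
  rw [psiStar, ← Finset.sum_product']
  have hset : μ.cells.filter (fun s => s.1 ≤ c.1 ∧ s.2 ≤ c.2)
      = Finset.range (c.1 + 1) ×ˢ Finset.range (c.2 + 1) := by
    rw [YoungDiagram.mem_cells] at hc
    ext s
    simp only [Finset.mem_filter, Finset.mem_product, Finset.mem_range, YoungDiagram.mem_cells]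
    constructor
    · rintro ⟨-, h1, h2⟩; omega
    · rintro ⟨h1, h2⟩
      have : (s.1, s.2) ∈ μ := μ.up_left_mem (by omega) (by omega) hc
      exact ⟨this, by omega, by omega⟩
  rw [hset]
  refine Finset.sum_bij' (fun x _ => (c.1 - x.1, c.2 - x.2)) (fun x _ => (c.1 - x.1, c.2 - x.2))
    ?_ ?_ ?_ ?_ ?_
  · rintro ⟨a1, a2⟩ ha
    simp only [Finset.mem_product, Finset.mem_range] at ha ⊢
    omega
  · rintro ⟨a1, a2⟩ ha
    simp only [Finset.mem_product, Finset.mem_range] at ha ⊢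
    omega
  · rintro ⟨a1, a2⟩ ha
    simp only [Finset.mem_product, Finset.mem_range] at ha
    dsimp only
    rw [Prod.mk.injEq]
    constructor <;> omega
  · rintro ⟨a1, a2⟩ ha
    simp only [Finset.mem_product, Finset.mem_range] at ha
    dsimp only
    rw [Prod.mk.injEq]
    constructor <;> omega
  · intro a _; rfl

lemma sum_psiStar_swap (μ : YoungDiagram) (g : ℕ → ℕ → ℝ≥0) {T : Finset (ℕ × ℕ)}
    (hT : T ⊆ μ.cells) :
    ∑ d ∈ T, psiStar g d
      = ∑ s ∈ μ.cells, (T.filter (fun d => s.1 ≤ d.1 ∧ s.2 ≤ d.2)).card • g s.1 s.2 := by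
  rw [Finset.sum_congr rfl (fun d hd => psiStar_eq μ g (hT hd))]
  calc ∑ d ∈ T, ∑ s ∈ μ.cells.filter (fun s => s.1 ≤ d.1 ∧ s.2 ≤ d.2), g s.1 s.2
      = ∑ d ∈ T, ∑ s ∈ μ.cells, if s.1 ≤ d.1 ∧ s.2 ≤ d.2 then g s.1 s.2 else 0 := by
        exact Finset.sum_congr rfl (fun d _ => Finset.sum_filter _ _)
    _ = ∑ s ∈ μ.cells, ∑ d ∈ T, if s.1 ≤ d.1 ∧ s.2 ≤ d.2 then g s.1 s.2 else 0 :=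
        Finset.sum_comm
    _ = ∑ s ∈ μ.cells, (T.filter (fun d => s.1 ≤ d.1 ∧ s.2 ≤ d.2)).card • g s.1 s.2 := by
        refine Finset.sum_congr rfl (fun s _ => ?_)
        rw [← Finset.sum_filter, Finset.sum_const]

lemma sum_psi_swap (μ : YoungDiagram) (g : ℕ → ℕ → ℝ≥0) {V : Finset (ℕ × ℕ)}
    (hV : V ⊆ μ.cells) :
    ∑ c ∈ V, psi μ g c
      = ∑ s ∈ μ.cells, (V.filter (fun c => (c.1 + s.1, c.2 + s.2) ∈ μ.cells)).card • g s.1 s.2 := by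
  rw [Finset.sum_congr rfl (fun c _ => psi_eq μ g c)]
  calc ∑ c ∈ V, ∑ s ∈ μ.cells.filter (fun s => (c.1 + s.1, c.2 + s.2) ∈ μ.cells), g s.1 s.2
      = ∑ c ∈ V, ∑ s ∈ μ.cells, if (c.1 + s.1, c.2 + s.2) ∈ μ.cells then g s.1 s.2 else 0 := by
        exact Finset.sum_congr rfl (fun c _ => Finset.sum_filter _ _)
    _ = ∑ s ∈ μ.cells, ∑ c ∈ V, if (c.1 + s.1, c.2 + s.2) ∈ μ.cells then g s.1 s.2 else 0 :=
        Finset.sum_comm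
    _ = ∑ s ∈ μ.cells, (V.filter (fun c => (c.1 + s.1, c.2 + s.2) ∈ μ.cells)).card • g s.1 s.2 := by
        refine Finset.sum_congr rfl (fun s _ => ?_)
        rw [← Finset.sum_filter, Finset.sum_const]

lemma part1 (μ : YoungDiagram) (g : ℕ → ℕ → ℝ≥0) :
    ∑ c ∈ μ.cells, psi μ g c = ∑ c ∈ μ.cells, psiStar g c := by
  rw [sum_psi_swap μ g (Finset.Subset.refl _), sum_psiStar_swap μ g (Finset.Subset.refl _)]
  refine Finset.sum_congr rfl (fun s _ => ?_)
  congr 1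
  refine Finset.card_bij' (fun c _ => (c.1 + s.1, c.2 + s.2)) (fun d _ => (d.1 - s.1, d.2 - s.2))
    ?_ ?_ ?_ ?_
  · rintro ⟨c1, c2⟩ hc
    rw [Finset.mem_filter] at hc ⊢
    dsimp only
    exact ⟨hc.2, Nat.le_add_left _ _, Nat.le_add_left _ _⟩
  · rintro ⟨d1, d2⟩ hd
    rw [Finset.mem_filter] at hd ⊢
    obtain ⟨hdm, h1, h2⟩ := hd
    rw [YoungDiagram.mem_cells] at hdm
    dsimp only at h1 h2 ⊢
    constructor
    · rw [YoungDiagram.mem_cells]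
      exact μ.up_left_mem (Nat.sub_le _ _) (Nat.sub_le _ _) hdm
    · have he : (d1 - s.1 + s.1, d2 - s.2 + s.2) = (d1, d2) := by
        rw [Prod.mk.injEq]; constructor <;> omega
      rw [he, YoungDiagram.mem_cells]
      exact hdm
  · rintro ⟨c1, c2⟩ hc
    dsimp only
    rw [Prod.mk.injEq]
    constructor <;> omega
  · rintro ⟨d1, d2⟩ hd
    rw [Finset.mem_filter] at hd
    obtain ⟨-, h1, h2⟩ := hd
    dsimp only at h1 h2 ⊢
    rw [Prod.mk.injEq]
    constructor <;> omega

lemma exists_V (μ : YoungDiagram) (g : ℕ → ℕ → ℝ≥0) (T : Finset (ℕ × ℕ)) (hT : T ⊆ μ.cells) :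
    ∃ V : Finset (ℕ × ℕ), V ⊆ μ.cells ∧ V.card = T.card ∧
      ∑ d ∈ T, psiStar g d ≤ ∑ c ∈ V, psi μ g c := by
  classical
  set W := μ.rowLen 0 with hWdef
  set H := μ.colLen 0 with hHdef
  set t : ℕ → ℕ := fun b => (T.filter (fun d => d.2 = b)).card with htdef
  set m : ℕ → ℕ := fun i => ((Finset.range W).filter (fun b => i < t b)).card with hmdef
  set V : Finset (ℕ × ℕ) :=
    ((Finset.range H) ×ˢ (Finset.range W)).filter (fun c => c.2 < m c.1) with hVdef
  have ht_le : ∀ b, t b ≤ μ.colLen b := by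
    intro b
    rw [htdef]
    have : ∀ d ∈ T.filter (fun d => d.2 = b), d.1 ∈ Finset.range (μ.colLen b) := by
      intro d hd
      rw [Finset.mem_filter] at hd
      rw [Finset.mem_range, ← hd.2]
      exact (cell_facts μ (hT hd.1)).1
    have hinj : ∀ d ∈ T.filter (fun d => d.2 = b), ∀ d' ∈ T.filter (fun d => d.2 = b),
        d.1 = d'.1 → d = d' := by
      rintro ⟨d1, d2⟩ hd ⟨e1, e2⟩ he hde
      rw [Finset.mem_filter] at hd he
      dsimp only at hd he hde
      rw [Prod.mk.injEq]
      exact ⟨hde, hd.2.trans he.2.symm⟩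
    simpa using Finset.card_le_card_of_injOn _ this hinj
  have ht_leH : ∀ b, t b ≤ H := fun b =>
    le_trans (ht_le b) (μ.colLen_anti 0 b (Nat.zero_le b))
  have hm_le : ∀ i, m i ≤ W := fun i => by
    rw [hmdef]
    exact le_trans (Finset.card_filter_le _ _) (le_of_eq (Finset.card_range W))
  -- V ⊆ μ.cells
  have hVsub : V ⊆ μ.cells := by
    rintro ⟨i, j⟩ hc
    rw [hVdef, Finset.mem_filter, Finset.mem_product] at hc
    obtain ⟨⟨hc1, hc2⟩, hcm⟩ := hc
    dsimp only at hc1 hc2 hcm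
    have hex : ∃ b, j ≤ b ∧ i < t b := by
      by_contra hno
      push_neg at hno
      have hsub : (Finset.range W).filter (fun b => i < t b) ⊆ Finset.range j := by
        intro b hb
        rw [Finset.mem_filter] at hb
        rw [Finset.mem_range]
        by_contra hbc
        exact absurd hb.2 (not_lt.mpr (hno b (le_of_not_gt hbc)))
      have := Finset.card_le_card hsub
      rw [Finset.card_range] at this
      simp only [hmdef] at hcm
      omega
    obtain ⟨b, hb1, hb2⟩ := hex
    have h1 : i < μ.colLen b := lt_of_lt_of_le hb2 (ht_le b)
    have h2 : i < μ.colLen j := lt_of_lt_of_le h1 (μ.colLen_anti j b hb1)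
    rw [YoungDiagram.mem_cells]
    exact YoungDiagram.mem_iff_lt_colLen.mpr h2
  -- card
  have hrange_inter : ∀ (N k : ℕ), k ≤ N → (Finset.range N).filter (fun j => j < k)
      = Finset.range k := by
    intro N k hk
    ext j
    simp only [Finset.mem_filter, Finset.mem_range]
    omega
  have hVcard : V.card = T.card := by
    have h1 : V.card = ∑ i ∈ Finset.range H, m i := by
      rw [hVdef, Finset.card_filter, Finset.sum_product]
      refine Finset.sum_congr rfl (fun i _ => ?_)
      rw [← Finset.card_filter, hrange_inter W (m i) (hm_le i), Finset.card_range]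
    have h2 : T.card = ∑ b ∈ Finset.range W, t b := by
      rw [htdef]
      exact Finset.card_eq_sum_card_fiberwise
        (fun d hd => Finset.mem_range.mpr (cell_facts μ (hT hd)).2.1)
    have h3 : ∑ i ∈ Finset.range H, m i = ∑ b ∈ Finset.range W, t b := by
      rw [hmdef]
      simp only [Finset.card_filter]
      rw [Finset.sum_comm]
      refine Finset.sum_congr rfl (fun b _ => ?_)
      rw [← Finset.card_filter, hrange_inter H (t b) (ht_leH b), Finset.card_range]
    omega
  -- counting inequality
  have hcount : ∀ s ∈ μ.cells,
      (T.filter (fun d => s.1 ≤ d.1 ∧ s.2 ≤ d.2)).card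
        ≤ (V.filter (fun c => (c.1 + s.1, c.2 + s.2) ∈ μ.cells)).card := by
    rintro ⟨p, q⟩ hs
    dsimp only
    set A : Finset (ℕ × ℕ) := ((Finset.range H) ×ˢ (Finset.range W)).filter
      (fun x => q ≤ x.2 ∧ x.1 < t x.2 ∧ x.1 + p < μ.colLen x.2) with hAdef
    -- step 1 : F ≤ A.card
    have step1 : (T.filter (fun d => p ≤ d.1 ∧ q ≤ d.2)).card ≤ A.card := by
      have hF : (T.filter (fun d => p ≤ d.1 ∧ q ≤ d.2)).card
          = ∑ b ∈ Finset.range W,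
            ((T.filter (fun d => p ≤ d.1 ∧ q ≤ d.2)).filter (fun d => d.2 = b)).card :=
        Finset.card_eq_sum_card_fiberwise (fun d hd =>
          Finset.mem_range.mpr (cell_facts μ (hT (Finset.mem_filter.mp hd).1)).2.1)
      have hA : A.card = ∑ b ∈ Finset.range W, (A.filter (fun x => x.2 = b)).card :=
        Finset.card_eq_sum_card_fiberwise (fun x hx => by
          rw [Finset.mem_coe, hAdef, Finset.mem_filter, Finset.mem_product] at hx
          exact hx.1.2)
      rw [hF, hA]
      refine Finset.sum_le_sum (fun b hb => ?_)
      by_cases hqb : q ≤ b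
      · -- LHS ≤ min (t b) (colLen b - p) = RHS
        have hL1 : ((T.filter (fun d => p ≤ d.1 ∧ q ≤ d.2)).filter (fun d => d.2 = b)).card
            ≤ t b := by
          rw [htdef]
          apply Finset.card_le_card
          intro d hd
          rw [Finset.mem_filter] at hd ⊢
          exact ⟨(Finset.mem_filter.mp hd.1).1, hd.2⟩
        have hL2 : ((T.filter (fun d => p ≤ d.1 ∧ q ≤ d.2)).filter (fun d => d.2 = b)).card
            ≤ μ.colLen b - p := by
          have hmap : ∀ d ∈ (T.filter (fun d => p ≤ d.1 ∧ q ≤ d.2)).filter (fun d => d.2 = b),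
              d.1 - p ∈ Finset.range (μ.colLen b - p) := by
            intro d hd
            rw [Finset.mem_filter, Finset.mem_filter] at hd
            obtain ⟨⟨hdT, hdp, hdq⟩, hdb⟩ := hd
            have := (cell_facts μ (hT hdT)).1
            rw [hdb] at this
            rw [Finset.mem_range]
            omega
          have hinj : ∀ d ∈ (T.filter (fun d => p ≤ d.1 ∧ q ≤ d.2)).filter (fun d => d.2 = b),
              ∀ d' ∈ (T.filter (fun d => p ≤ d.1 ∧ q ≤ d.2)).filter (fun d => d.2 = b),
              d.1 - p = d'.1 - p → d = d' := by
            rintro ⟨d1, d2⟩ hd ⟨e1, e2⟩ he hde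
            rw [Finset.mem_filter, Finset.mem_filter] at hd he
            obtain ⟨⟨-, hdp, -⟩, hdb⟩ := hd
            obtain ⟨⟨-, hep, -⟩, heb⟩ := he
            dsimp only at hdp hdb hep heb hde
            rw [Prod.mk.injEq]
            constructor
            · omega
            · rw [hdb, heb]
          simpa using Finset.card_le_card_of_injOn _ hmap hinj
        -- compute RHS
        have hR : (A.filter (fun x => x.2 = b)).card
            = min (t b) (μ.colLen b - p) := by
          have hbij : (A.filter (fun x => x.2 = b)).card
              = ((Finset.range H).filter (fun i => i < t b ∧ i + p < μ.colLen b)).card := by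
            refine Finset.card_bij' (fun x _ => x.1) (fun i _ => (i, b)) ?_ ?_ ?_ ?_
            · rintro ⟨x1, x2⟩ hx
              rw [Finset.mem_filter] at hx
              obtain ⟨hxA, hxb⟩ := hx
              rw [hAdef, Finset.mem_filter, Finset.mem_product] at hxA
              obtain ⟨⟨hx1, hx2⟩, -, hxt, hxc⟩ := hxA
              dsimp only at hxb hxt hxc hx1 hx2 ⊢
              rw [Finset.mem_filter, Finset.mem_range]
              rw [hxb] at hxt hxc
              exact ⟨Finset.mem_range.mp hx1, hxt, hxc⟩
            · intro i hi
              rw [Finset.mem_filter, Finset.mem_range] at hi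
              obtain ⟨hiH, hit, hic⟩ := hi
              rw [Finset.mem_filter]
              constructor
              · rw [hAdef, Finset.mem_filter, Finset.mem_product]
                exact ⟨⟨Finset.mem_range.mpr hiH, hb⟩, hqb, hit, hic⟩
              · rfl
            · rintro ⟨x1, x2⟩ hx
              rw [Finset.mem_filter] at hx
              have : x2 = b := hx.2
              rw [Prod.mk.injEq]
              exact ⟨rfl, this.symm⟩
            · intro i hi; rfl
          rw [hbij]
          have : (Finset.range H).filter (fun i => i < t b ∧ i + p < μ.colLen b)
              = Finset.range (min (t b) (μ.colLen b - p)) := by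
            ext i
            simp only [Finset.mem_filter, Finset.mem_range]
            have h1 := ht_leH b
            have h2 : μ.colLen b ≤ H := μ.colLen_anti 0 b (Nat.zero_le b)
            omega
          rw [this, Finset.card_range]
        rw [hR]
        exact le_min hL1 hL2
      · -- LHS empty
        have : (T.filter (fun d => p ≤ d.1 ∧ q ≤ d.2)).filter (fun d => d.2 = b) = ∅ := by
          apply Finset.eq_empty_of_forall_notMem
          intro d hd
          rw [Finset.mem_filter, Finset.mem_filter] at hd
          obtain ⟨⟨-, -, hdq⟩, hdb⟩ := hd
          rw [hdb] at hdq
          exact hqb hdq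
        rw [this]
        simp
    -- step 2 : A.card ≤ G
    have step2 : A.card ≤ (V.filter (fun c => (c.1 + p, c.2 + q) ∈ μ.cells)).card := by
      have hA : A.card = ∑ i ∈ Finset.range H, (A.filter (fun x => x.1 = i)).card :=
        Finset.card_eq_sum_card_fiberwise (fun x hx => by
          rw [Finset.mem_coe, hAdef, Finset.mem_filter, Finset.mem_product] at hx
          exact hx.1.1)
      have hG : (V.filter (fun c => (c.1 + p, c.2 + q) ∈ μ.cells)).card
          = ∑ i ∈ Finset.range H,
            ((V.filter (fun c => (c.1 + p, c.2 + q) ∈ μ.cells)).filter (fun c => c.1 = i)).card :=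
        Finset.card_eq_sum_card_fiberwise (fun c hc => by
          rw [Finset.mem_coe, Finset.mem_filter, hVdef, Finset.mem_filter, Finset.mem_product] at hc
          exact hc.1.1.1)
      rw [hA, hG]
      refine Finset.sum_le_sum (fun i hi => ?_)
      have hiH := Finset.mem_range.mp hi
      -- identify both sides with ℕ-sets
      set K : ℕ := ((Finset.range W).filter (fun j => i + p < μ.colLen (j + q))).card with hKdef
      have hKdc : ∀ a ∈ (Finset.range W).filter (fun j => i + p < μ.colLen (j + q)),
          ∀ b, b ≤ a → b ∈ (Finset.range W).filter (fun j => i + p < μ.colLen (j + q)) := by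
        intro a ha b hba
        rw [Finset.mem_filter, Finset.mem_range] at ha ⊢
        exact ⟨by omega, lt_of_lt_of_le ha.2 (μ.colLen_anti (b + q) (a + q) (by omega))⟩
      have hKiff : ∀ j, (j ∈ (Finset.range W).filter (fun j => i + p < μ.colLen (j + q)))
          ↔ j < K := fun j => downclosed_mem_iff hKdc j
      have hKle : K ≤ W := le_trans (Finset.card_filter_le _ _) (le_of_eq (Finset.card_range W))
      -- LHS card
      have hAi : (A.filter (fun x => x.1 = i)).card
          = ((Finset.range W).filter (fun b => q ≤ b ∧ i < t b ∧ i + p < μ.colLen b)).card := by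
        refine Finset.card_bij' (fun x _ => x.2) (fun b _ => (i, b)) ?_ ?_ ?_ ?_
        · rintro ⟨x1, x2⟩ hx
          rw [Finset.mem_filter] at hx
          obtain ⟨hxA, hxi⟩ := hx
          rw [hAdef, Finset.mem_filter, Finset.mem_product] at hxA
          obtain ⟨⟨hx1, hx2⟩, hxq, hxt, hxc⟩ := hxA
          dsimp only at hxi hxq hxt hxc hx2 ⊢
          rw [Finset.mem_filter]
          rw [hxi] at hxt hxc
          exact ⟨hx2, hxq, hxt, hxc⟩
        · intro b hbm
          rw [Finset.mem_filter] at hbm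
          obtain ⟨hbW, hbq, hbt, hbc⟩ := hbm
          rw [Finset.mem_filter]
          constructor
          · rw [hAdef, Finset.mem_filter, Finset.mem_product]
            exact ⟨⟨hi, hbW⟩, hbq, hbt, hbc⟩
          · rfl
        · rintro ⟨x1, x2⟩ hx
          rw [Finset.mem_filter] at hx
          rw [Prod.mk.injEq]
          exact ⟨hx.2.symm, rfl⟩
        · intro b _; rfl
      -- RHS card
      have hGi : ((V.filter (fun c => (c.1 + p, c.2 + q) ∈ μ.cells)).filter
            (fun c => c.1 = i)).card
          = min (m i) K := by
        have hbij : ((V.filter (fun c => (c.1 + p, c.2 + q) ∈ μ.cells)).filter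
              (fun c => c.1 = i)).card
            = ((Finset.range W).filter (fun j => j < m i ∧ i + p < μ.colLen (j + q))).card := by
          refine Finset.card_bij' (fun c _ => c.2) (fun j _ => (i, j)) ?_ ?_ ?_ ?_
          · rintro ⟨c1, c2⟩ hc
            rw [Finset.mem_filter] at hc
            obtain ⟨hcV, hci⟩ := hc
            rw [Finset.mem_filter] at hcV
            obtain ⟨hcV, hcmem⟩ := hcV
            rw [hVdef, Finset.mem_filter, Finset.mem_product] at hcV
            obtain ⟨⟨hc1, hc2⟩, hcm⟩ := hcV
            dsimp only at hci hcm hcmem hc2 ⊢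
            rw [YoungDiagram.mem_cells, YoungDiagram.mem_iff_lt_colLen] at hcmem
            rw [Finset.mem_filter]
            rw [hci] at hcm hcmem
            exact ⟨hc2, hcm, hcmem⟩
          · intro j hj
            rw [Finset.mem_filter] at hj
            obtain ⟨hjW, hjm, hjc⟩ := hj
            rw [Finset.mem_filter]
            refine ⟨?_, rfl⟩
            rw [Finset.mem_filter]
            constructor
            · rw [hVdef, Finset.mem_filter, Finset.mem_product]
              exact ⟨⟨hi, hjW⟩, hjm⟩
            · rw [YoungDiagram.mem_cells, YoungDiagram.mem_iff_lt_colLen]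
              exact hjc
          · rintro ⟨c1, c2⟩ hc
            rw [Finset.mem_filter] at hc
            rw [Prod.mk.injEq]
            exact ⟨hc.2.symm, rfl⟩
          · intro j _; rfl
        rw [hbij]
        have hset : (Finset.range W).filter (fun j => j < m i ∧ i + p < μ.colLen (j + q))
            = Finset.range (min (m i) K) := by
          ext j
          constructor
          · intro hj
            rw [Finset.mem_filter, Finset.mem_range] at hj
            obtain ⟨hjW, hjm, hjc⟩ := hj
            have : j < K := (hKiff j).mp (by
              rw [Finset.mem_filter, Finset.mem_range]
              exact ⟨hjW, hjc⟩)
            rw [Finset.mem_range]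
            omega
          · intro hj
            rw [Finset.mem_range] at hj
            have hjm : j < m i := by omega
            have hjK : j < K := by omega
            have := (hKiff j).mpr hjK
            rw [Finset.mem_filter, Finset.mem_range] at this
            rw [Finset.mem_filter, Finset.mem_range]
            exact ⟨this.1, hjm, this.2⟩
        rw [hset, Finset.card_range]
      rw [hAi, hGi]
      -- two bounds
      apply le_min
      · rw [hmdef]
        apply Finset.card_le_card
        intro b hb
        rw [Finset.mem_filter] at hb ⊢
        exact ⟨hb.1, hb.2.2.1⟩
      · rw [hKdef]
        have hmap : ∀ b ∈ (Finset.range W).filter (fun b => q ≤ b ∧ i < t b ∧ i + p < μ.colLen b),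
            b - q ∈ (Finset.range W).filter (fun j => i + p < μ.colLen (j + q)) := by
          intro b hb
          rw [Finset.mem_filter, Finset.mem_range] at hb ⊢
          obtain ⟨hbW, hbq, -, hbc⟩ := hb
          rw [Nat.sub_add_cancel hbq]
          exact ⟨by omega, hbc⟩
        have hinj : ∀ b ∈ (Finset.range W).filter (fun b => q ≤ b ∧ i < t b ∧ i + p < μ.colLen b),
            ∀ b' ∈ (Finset.range W).filter (fun b => q ≤ b ∧ i < t b ∧ i + p < μ.colLen b),
            b - q = b' - q → b = b' := by
          intro b hb b' hb'
          rw [Finset.mem_filter] at hb hb'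
          omega
        exact Finset.card_le_card_of_injOn _ hmap hinj
    exact le_trans step1 step2
  -- assemble
  refine ⟨V, hVsub, hVcard, ?_⟩
  rw [sum_psiStar_swap μ g hT, sum_psi_swap μ g hVsub]
  refine Finset.sum_le_sum (fun s hs => ?_)
  exact nsmul_le_nsmul_left zero_le (hcount s hs)

end HookAux

open Classical in
/-- The sums of `ψ` and `ψ*` over the diagram agree, and if `g` is positive somewhere
and all `ψ(u)`, `ψ*(u)` are positive, then the product of the positive `ψ(u)` is at
most the product of the positive `ψ*(u)`. -/
theorem sum_psi_eq_and_prod_psi_le (μ : YoungDiagram) (g : ℕ → ℕ → ℝ≥0) :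
    (∑ c ∈ μ.cells, psi μ g c = ∑ c ∈ μ.cells, psiStar g c) ∧
    ((∃ p q, 0 < g p q) →
      (∀ c ∈ μ.cells, 0 < psi μ g c ∧ 0 < psiStar g c) →
      ∏ c ∈ μ.cells.filter (fun c => 0 < psi μ g c), psi μ g c ≤
        ∏ c ∈ μ.cells.filter (fun c => 0 < psiStar g c), psiStar g c) := by
  refine ⟨HookAux.part1 μ g, fun _ hpos => ?_⟩
  rw [Finset.filter_true_of_mem (fun c hc => (hpos c hc).1),
      Finset.filter_true_of_mem (fun c hc => (hpos c hc).2)]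
  rw [← NNReal.coe_le_coe, NNReal.coe_prod, NNReal.coe_prod]
  set n := μ.cells.card with hn
  set e : Fin n ≃ {x // x ∈ μ.cells} := μ.cells.equivFin.symm with he
  set X : Fin n → ℝ := fun i => (psi μ g (e i) : ℝ) with hX
  set Y : Fin n → ℝ := fun i => (psiStar g (e i) : ℝ) with hY
  have etrans : ∀ f : (ℕ × ℕ) → ℝ, ∑ i, f (e i) = ∑ c ∈ μ.cells, f c := by
    intro f
    rw [Equiv.sum_comp e (fun x : {x // x ∈ μ.cells} => f x)]
    exact Finset.sum_coe_sort μ.cells f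
  have etransP : ∀ f : (ℕ × ℕ) → ℝ, ∏ i, f (e i) = ∏ c ∈ μ.cells, f c := by
    intro f
    rw [Equiv.prod_comp e (fun x : {x // x ∈ μ.cells} => f x)]
    exact Finset.prod_coe_sort μ.cells f
  have hXpos : ∀ i, 0 < X i := fun i => by
    rw [hX]
    exact_mod_cast (hpos _ (e i).2).1
  have hYpos : ∀ i, 0 < Y i := fun i => by
    rw [hY]
    exact_mod_cast (hpos _ (e i).2).2
  have htot : ∑ i, X i = ∑ i, Y i := by
    rw [hX, hY, etrans (fun c => (psi μ g c : ℝ)), etrans (fun c => (psiStar g c : ℝ))]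
    have := HookAux.part1 μ g
    exact_mod_cast congrArg (fun z : ℝ≥0 => (z : ℝ)) this
  have hmaj : ∀ S : Finset (Fin n), ∃ S' : Finset (Fin n), S'.card = S.card ∧
      ∑ i ∈ S, Y i ≤ ∑ i ∈ S', X i := by
    intro S
    classical
    set T : Finset (ℕ × ℕ) := S.image (fun i => ((e i : {x // x ∈ μ.cells}) : ℕ × ℕ)) with hT
    have hinj : Function.Injective (fun i : Fin n => ((e i : {x // x ∈ μ.cells}) : ℕ × ℕ)) :=
      fun a b hab => e.injective (Subtype.ext hab)
    have hTsub : T ⊆ μ.cells := by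
      intro d hd
      rw [hT, Finset.mem_image] at hd
      obtain ⟨i, _, rfl⟩ := hd
      exact (e i).2
    have hTcard : T.card = S.card := Finset.card_image_of_injective _ hinj
    obtain ⟨V, hVsub, hVcard, hVsum⟩ := HookAux.exists_V μ g T hTsub
    set S' : Finset (Fin n) := Finset.univ.filter
      (fun i => ((e i : {x // x ∈ μ.cells}) : ℕ × ℕ) ∈ V) with hS'
    have hS'card : S'.card = S.card := by
      rw [← hTcard, ← hVcard]
      apply Finset.card_bij (fun (i : Fin n) (_ : i ∈ S') => ((e i : {x // x ∈ μ.cells}) : ℕ × ℕ))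
      · intro i hi
        rw [hS', Finset.mem_filter] at hi
        exact hi.2
      · intro a ha b hb hab
        exact hinj hab
      · intro v hv
        refine ⟨e.symm ⟨v, hVsub hv⟩, ?_, ?_⟩
        · rw [hS', Finset.mem_filter]
          refine ⟨Finset.mem_univ _, ?_⟩
          rw [Equiv.apply_symm_apply]
          exact hv
        · rw [Equiv.apply_symm_apply]
      
    refine ⟨S', hS'card, ?_⟩
    have hYS : ∑ i ∈ S, Y i = ∑ d ∈ T, (psiStar g d : ℝ) := by
      rw [hT, Finset.sum_image (fun a _ b _ hab => hinj hab)]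
    have hXS' : ∑ i ∈ S', X i = ∑ c ∈ V, (psi μ g c : ℝ) := by
      apply Finset.sum_bij (fun (i : Fin n) (_ : i ∈ S') => ((e i : {x // x ∈ μ.cells}) : ℕ × ℕ))
      · intro i hi
        rw [hS', Finset.mem_filter] at hi
        exact hi.2
      · intro a ha b hb hab
        exact hinj hab
      · intro v hv
        refine ⟨e.symm ⟨v, hVsub hv⟩, ?_, ?_⟩
        · rw [hS', Finset.mem_filter]
          refine ⟨Finset.mem_univ _, ?_⟩
          rw [Equiv.apply_symm_apply]
          exact hv
        · rw [Equiv.apply_symm_apply]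
      · intro i hi
        rw [hX]
    rw [hYS, hXS']
    have := hVsum
    calc ∑ d ∈ T, (psiStar g d : ℝ) = ((∑ d ∈ T, psiStar g d : ℝ≥0) : ℝ) := by
          rw [NNReal.coe_sum]
      _ ≤ ((∑ c ∈ V, psi μ g c : ℝ≥0) : ℝ) := NNReal.coe_le_coe.mpr hVsum
      _ = ∑ c ∈ V, (psi μ g c : ℝ) := by rw [NNReal.coe_sum]
  have hfinal := HookAux.key n X Y hXpos hYpos htot hmaj
  rw [hX, hY, etransP (fun c => (psi μ g c : ℝ)), etransP (fun c => (psiStar g c : ℝ))] at hfinal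
  exact hfinal
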